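/- Let D(λ) = α² + 2iα(sin θ₊ + sin θ₋) - 4 sin θ₊ sin θ₋ - β², where 2cos θ_± = ω + 2 ± iλ, α = a + b/2, β = b/2, and (ω+2)² = 4 + a² with a > 0. Then D(0) = 0 and D'(0) = 0, i.e., λ = 0 is a zero of D of multiplicity at least 2. -/

import Mathlib

/-- The determinant D(λ) = α² + 2iα(sin θ₊ + sin θ₋) - 4 sin θ₊ sin θ₋ - β²,
with α = a + b/2, β = b/2 and the branches
sin θ_± = (i/2)((ω+2±iλ)² - 4)^{1/2} (so that sin θ_± = ia/2 at λ = 0). -/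
noncomputable def Ddet (ω a b : ℝ) (lam : ℂ) : ℂ :=
  (((a : ℂ) + b / 2)) ^ 2
    + 2 * Complex.I * ((a : ℂ) + b / 2) *
        ((1 / 2) * Complex.I * ((((ω : ℂ) + 2 + Complex.I * lam) ^ 2 - 4) ^ ((1 : ℂ) / 2))
          + (1 / 2) * Complex.I * ((((ω : ℂ) + 2 - Complex.I * lam) ^ 2 - 4) ^ ((1 : ℂ) / 2)))
    - 4 * ((1 / 2) * Complex.I * ((((ω : ℂ) + 2 + Complex.I * lam) ^ 2 - 4) ^ ((1 : ℂ) / 2)))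
        * ((1 / 2) * Complex.I * ((((ω : ℂ) + 2 - Complex.I * lam) ^ 2 - 4) ^ ((1 : ℂ) / 2)))
    - ((b : ℂ) / 2) ^ 2

/-! `D` is even in `λ`: replacing `λ` by `-λ` swaps the two branches `θ₊` and `θ₋`, so `D'(0) = 0`.
At `λ = 0` both square roots equal `((ω + 2)² - 4)^{1/2} = (a²)^{1/2} = a`,
and `D(0) = α² - 2αa + a² - β² = (α - a)² - β² = 0` since `α - a = β`. -/

open Complex

theorem deriv_zero_of_even {𝕜 F : Type*} [NontriviallyNormedField 𝕜] [CharZero 𝕜]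
    [NormedAddCommGroup F] [NormedSpace 𝕜 F] {f : 𝕜 → F} (hf : Function.Even f) :
    deriv f 0 = 0 := by
  have h := deriv_comp_neg f (0 : 𝕜)
  rw [show (fun x ↦ f (-x)) = f from funext hf, neg_zero] at h
  have h2 : (2 : 𝕜) • deriv f 0 = 0 := by
    rw [two_smul]
    nth_rewrite 2 [h]
    exact add_neg_cancel _
  exact (smul_eq_zero.mp h2).resolve_left two_ne_zero

theorem Ddet_even (ω a b : ℝ) : Function.Even (Ddet ω a b) := by
  intro lam
  simp only [Ddet, mul_neg, sub_neg_eq_add, ← sub_eq_add_neg]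
  ring

theorem Ddet_zero {ω a : ℝ} (b : ℝ) (ha : 0 < a) (hωa : (ω + 2) ^ 2 = 4 + a ^ 2) :
    Ddet ω a b 0 = 0 := by
  have hbase : ((ω : ℂ) + 2) ^ 2 - 4 = (a : ℂ) ^ 2 := by
    rw [sub_eq_iff_eq_add']
    exact_mod_cast hωa
  have hroot : (((ω : ℂ) + 2) ^ 2 - 4) ^ ((1 : ℂ) / 2) = a := by
    rw [hbase, one_div]
    exact sq_cpow_two_inv (by simpa using ha)
  simp only [Ddet, mul_zero, add_zero, sub_zero, hroot]
  linear_combination (a : ℂ) * (a + b) * I_sq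

theorem det_zero_order_two_general (a b ω : ℝ) (ha : 0 < a)
    (hωa : (ω + 2) ^ 2 = 4 + a ^ 2) :
    Ddet ω a b 0 = 0 ∧ deriv (Ddet ω a b) 0 = 0 :=
  ⟨Ddet_zero b ha hωa, deriv_zero_of_even (Ddet_even ω a b)⟩

/-- λ = 0 is a zero of the determinant D of multiplicity at least 2:
D(0) = 0 and D'(0) = 0. -/
theorem det_zero_order_two (a b ω : ℝ) (ha : 0 < a) (hω : 0 < ω)
    (hωa : (ω + 2) ^ 2 = 4 + a ^ 2) :
    Ddet ω a b 0 = 0 ∧ deriv (Ddet ω a b) 0 = 0 :=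
  det_zero_order_two_general a b ω ha hωa
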